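/- If a + b > c + q + 2, then (a−q−1)(b−q−1)·₃F₂(1,c,q; a,b; 1) + q(a+b−c−2−q)·₃F₂(1,c,q+1; a,b; 1) = (a−1)(b−1). -/

import Mathlib

/-!
The summand `t n = (c)ₙ(q)ₙ / ((a)ₙ(b)ₙ)` of both series has the antidifference
`u n = (n + a - 1)(n + b - 1) t n`: the difference `u n - u (n + 1)` is exactly the `n`-th term of
the left-hand side, so the left-hand side telescopes to `u 0 = (a - 1)(b - 1)` once `u n → 0`.
For large `n` all factors have fixed signs, and since `a + b - c - q - 2 > 0` the moduli
satisfy `|u n| - |u (n + 1)| ≥ δ |u n| / (n + 1)`; hence `|u n|` decreases, and a positive limit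
would make a multiple of the harmonic series converge.
-/

noncomputable def poch (a : ℝ) (n : ℕ) : ℝ := (ascPochhammer ℝ n).eval a

/-- Generalized hypergeometric series ₃F₂(a,b,c; d,e; x). -/
noncomputable def F32 (a b c d e x : ℝ) : ℝ :=
  ∑' n : ℕ, (poch a n * poch b n * poch c n) / (poch d n * poch e n * (n.factorial : ℝ)) * x ^ n

/-- `x` is not a non-positive integer. -/
def NotNonposInt (x : ℝ) : Prop := ∀ m : ℕ, x ≠ -(m : ℝ)

open Filter Topology Finset

lemma poch_succ (a : ℝ) (n : ℕ) : poch a (n + 1) = poch a n * (a + n) :=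
  ascPochhammer_succ_eval n a

lemma mul_poch_add_one (q : ℝ) (n : ℕ) : q * poch (q + 1) n = (q + n) * poch q n := by
  calc q * poch (q + 1) n = poch q (n + 1) := by simp [poch, ascPochhammer_succ_left]
    _ = (q + n) * poch q n := by rw [poch_succ, mul_comm]

lemma poch_one (n : ℕ) : poch 1 n = n.factorial :=
  ascPochhammer_eval_one ℝ n

lemma poch_ne_zero {a : ℝ} (ha : NotNonposInt a) (n : ℕ) : poch a n ≠ 0 := by
  rw [poch, Ne, ascPochhammer_eval_eq_zero_iff]
  rintro ⟨k, -, hk⟩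
  exact ha k (by linarith)

lemma NotNonposInt.add_natCast_ne_zero {a : ℝ} (ha : NotNonposInt a) (n : ℕ) : a + n ≠ 0 :=
  fun h => ha n (by linarith)

lemma eventually_lt_mul_add {α : ℝ} (β γ : ℝ) (hα : 0 < α) :
    ∀ᶠ x : ℝ in atTop, γ < α * x + β :=
  (tendsto_atTop_add_const_right _ β (tendsto_id.const_mul_atTop hα)).eventually_gt_atTop γ

lemma summable_sub_succ_of_antitone {V : ℕ → ℝ} (hV : Antitone V) (h0 : ∀ n, 0 ≤ V n) :
    Summable fun n => V n - V (n + 1) :=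
  summable_of_sum_range_le (fun n => sub_nonneg.2 (hV n.le_succ)) fun n => by
    rw [sum_range_sub']
    linarith [h0 n]

lemma tendsto_zero_of_mul_le_sub_succ {V : ℕ → ℝ} {δ r : ℝ} (hδ : 0 < δ) (hr : 0 < r)
    (hV : Antitone V) (h0 : ∀ n, 0 ≤ V n)
    (hstep : ∀ n, δ * V n ≤ (n + r) * (V n - V (n + 1))) :
    Tendsto V atTop (𝓝 0) := by
  have hbdd : BddBelow (Set.range V) := ⟨0, by rintro _ ⟨n, rfl⟩; exact h0 n⟩
  have hL0 : 0 ≤ ⨅ n, V n := le_ciInf h0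
  suffices hL : ⨅ n, V n = 0 by simpa [hL] using tendsto_atTop_ciInf hV hbdd
  by_contra hL
  set L := ⨅ n, V n
  have hLpos : 0 < δ * L := mul_pos hδ (lt_of_le_of_ne hL0 (Ne.symm hL))
  -- `V n ≥ L` for all `n`, so a positive multiple of the harmonic series would converge
  have hsum : Summable fun n : ℕ => δ * L / (n + r) := by
    refine (summable_sub_succ_of_antitone hV h0).of_nonneg_of_le (fun n => by positivity)
      fun n => ?_
    rw [div_le_iff₀ (by positivity)]
    nlinarith [hstep n, ciInf_le hbdd n]
  have hharm : Summable fun n : ℕ => 1 / |n + r| ^ (1 : ℝ) :=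
    (hsum.mul_left (δ * L)⁻¹).congr fun n => by
      rw [abs_of_pos (by positivity), Real.rpow_one]
      field_simp
  exact lt_irrefl _ ((Real.summable_one_div_nat_add_rpow r 1).1 hharm)

lemma tendsto_zero_and_summable_sub_succ {u : ℕ → ℝ} {δ : ℝ} (hδ : 0 < δ)
    (h : ∀ᶠ n in atTop, |u n - u (n + 1)| = |u n| - |u (n + 1)| ∧
      δ * |u n| ≤ (n + 1) * |u n - u (n + 1)|) :
    Tendsto u atTop (𝓝 0) ∧ Summable fun n => u n - u (n + 1) := by
  obtain ⟨N, hN⟩ := eventually_atTop.1 h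
  set V : ℕ → ℝ := fun k => |u (k + N)|
  have hdiff : ∀ k, |u (k + N) - u (k + N + 1)| = V k - V (k + 1) := fun k => by
    simp only [V, (hN (k + N) (by omega)).1, add_right_comm k 1 N]
  have hV : Antitone V := antitone_nat_of_succ_le fun k => by
    linarith [hdiff k, abs_nonneg (u (k + N) - u (k + N + 1))]
  have hstep : ∀ k : ℕ, δ * V k ≤ (k + (N + 1 : ℝ)) * (V k - V (k + 1)) := fun k => by
    have := (hN (k + N) (by omega)).2
    push_cast at this
    rw [← hdiff k]
    linarith
  have hVlim :=
    tendsto_zero_of_mul_le_sub_succ hδ (by positivity) hV (fun k => abs_nonneg _) hstep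
  constructor
  · rw [← tendsto_add_atTop_iff_nat N]
    exact tendsto_zero_iff_abs_tendsto_zero _ |>.2 hVlim
  · rw [← summable_nat_add_iff N]
    refine .of_norm <| (summable_sub_succ_of_antitone hV fun k => abs_nonneg _).congr fun k => ?_
    rw [Real.norm_eq_abs, hdiff]

lemma hasSum_sub_succ {G : Type*} [AddCommGroup G] [TopologicalSpace G]
    [IsTopologicalAddGroup G] [T2Space G] {u : ℕ → G} {l : G}
    (hs : Summable fun n => u n - u (n + 1))
    (hu : Tendsto u atTop (𝓝 l)) : HasSum (fun n => u n - u (n + 1)) (u 0 - l) := by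
  convert hs.hasSum
  refine tendsto_nhds_unique ?_ hs.hasSum.tendsto_sum_nat
  simp_rw [sum_range_sub']
  exact tendsto_const_nhds.sub hu

noncomputable def pochRatio (a b c q : ℝ) (n : ℕ) : ℝ :=
  poch c n * poch q n / (poch a n * poch b n)

noncomputable def antidiff (a b c q : ℝ) (n : ℕ) : ℝ :=
  (n + a - 1) * (n + b - 1) * pochRatio a b c q n

section

variable {a b c q : ℝ}

lemma F32_eq_tsum_pochRatio (ha : NotNonposInt a) (hb : NotNonposInt b) :
    F32 1 c q a b 1 = ∑' n, pochRatio a b c q n := by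
  refine tsum_congr fun n => ?_
  have := poch_ne_zero ha n
  have := poch_ne_zero hb n
  have : (n.factorial : ℝ) ≠ 0 := by positivity
  rw [poch_one, one_pow, mul_one, pochRatio]
  field_simp

lemma mul_F32_add_one_eq_tsum (ha : NotNonposInt a) (hb : NotNonposInt b) :
    q * F32 1 c (q + 1) a b 1 = ∑' n : ℕ, (q + n) * pochRatio a b c q n := by
  rw [F32, ← tsum_mul_left]
  refine tsum_congr fun n => ?_
  have := poch_ne_zero ha n
  have := poch_ne_zero hb n
  have : (n.factorial : ℝ) ≠ 0 := by positivity
  rw [poch_one, one_pow, mul_one, pochRatio]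
  field_simp
  linear_combination poch c n * mul_poch_add_one q n

lemma pochRatio_succ (ha : NotNonposInt a) (hb : NotNonposInt b) (n : ℕ) :
    (n + a) * (n + b) * pochRatio a b c q (n + 1) = (n + c) * (n + q) * pochRatio a b c q n := by
  have := poch_ne_zero ha n
  have := poch_ne_zero hb n
  have := ha.add_natCast_ne_zero n
  have := hb.add_natCast_ne_zero n
  simp only [pochRatio, poch_succ]
  field_simp
  ring

lemma antidiff_zero : antidiff a b c q 0 = (a - 1) * (b - 1) := by
  simp [antidiff, pochRatio, poch]

lemma antidiff_succ (ha : NotNonposInt a) (hb : NotNonposInt b) (n : ℕ) :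
    antidiff a b c q (n + 1) = (n + c) * (n + q) * pochRatio a b c q n := by
  rw [antidiff, ← pochRatio_succ ha hb]
  push_cast
  ring

lemma antidiff_sub_antidiff_succ (ha : NotNonposInt a) (hb : NotNonposInt b) (n : ℕ) :
    antidiff a b c q n - antidiff a b c q (n + 1) =
      (a - q - 1) * (b - q - 1) * pochRatio a b c q n
        + (a + b - c - 2 - q) * ((q + n) * pochRatio a b c q n) := by
  rw [antidiff_succ ha hb, antidiff]
  ring

lemma eventually_abs_antidiff (ha : NotNonposInt a) (hb : NotNonposInt b)
    (h : a + b > c + q + 2) :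
    ∃ δ > 0, ∀ᶠ n : ℕ in atTop,
      (|antidiff a b c q n - antidiff a b c q (n + 1)|
          = |antidiff a b c q n| - |antidiff a b c q (n + 1)| ∧
        δ * |antidiff a b c q n|
          ≤ (n + 1) * |antidiff a b c q n - antidiff a b c q (n + 1)|) ∧
      |pochRatio a b c q n| ≤ |antidiff a b c q n - antidiff a b c q (n + 1)| := by
  have hd : 0 < a + b - c - 2 - q := by linarith
  set E := (a - q - 1) * (b - q - 1) + (a + b - c - 2 - q) * q
  -- With `d = a + b - c - 2 - q` and `e x` the last right-hand side below,
  -- `(x + a - 1)(x + b - 1) ≤ 2 (x + 1)(x + b - 1) ≤ (8 / d) (x + 1) e x`, whence `δ = d / 8`.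
  have hx : ∀ᶠ x : ℝ in atTop,
      0 < x + a - 1 ∧ 0 < x + b - 1 ∧ 0 ≤ x + c ∧ 0 ≤ x + q ∧
      x + a - 1 ≤ 2 * (x + 1) ∧
      1 ≤ (a - q - 1) * (b - q - 1) + (a + b - c - 2 - q) * (q + x) ∧
      (a + b - c - 2 - q) / 4 * (x + b - 1)
        ≤ (a - q - 1) * (b - q - 1) + (a + b - c - 2 - q) * (q + x) := by
    filter_upwards [eventually_lt_mul_add (a - 1) 0 one_pos,
      eventually_lt_mul_add (b - 1) 0 one_pos, eventually_lt_mul_add c 0 one_pos,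
      eventually_lt_mul_add q 0 one_pos, eventually_lt_mul_add (3 - a) 0 one_pos,
      eventually_lt_mul_add E 1 hd,
      eventually_lt_mul_add (E - (a + b - c - 2 - q) * (b - 1) / 4) 0
        (by positivity : 0 < 3 * (a + b - c - 2 - q) / 4)]
      with x h1 h2 h3 h4 h5 h6 h7
    refine ⟨by linarith, by linarith, by linarith, by linarith, by linarith, ?_, ?_⟩
    · linear_combination h6.le
    · linear_combination h7.le
  refine ⟨(a + b - c - 2 - q) / 8, by positivity, ?_⟩
  filter_upwards [tendsto_natCast_atTop_atTop.eventually hx]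
    with n ⟨hPa, hPb, hc, hq, hP2, he1, he⟩
  have hu : |antidiff a b c q n| = (n + a - 1) * (n + b - 1) * |pochRatio a b c q n| := by
    rw [antidiff, abs_mul, abs_of_pos (mul_pos hPa hPb)]
  have hu1 : |antidiff a b c q (n + 1)| = (n + c) * (n + q) * |pochRatio a b c q n| := by
    rw [antidiff_succ ha hb, abs_mul, abs_of_nonneg (mul_nonneg hc hq)]
  have hs : |antidiff a b c q n - antidiff a b c q (n + 1)| =
      ((a - q - 1) * (b - q - 1) + (a + b - c - 2 - q) * (q + n)) * |pochRatio a b c q n| := by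
    rw [antidiff_sub_antidiff_succ ha hb, ← mul_assoc, ← add_mul, abs_mul,
      abs_of_pos (by linarith)]
  rw [hu, hu1, hs]
  refine ⟨⟨by ring, ?_⟩, le_mul_of_one_le_left (abs_nonneg _) he1⟩
  have hP : (a + b - c - 2 - q) / 8 * ((n + a - 1) * (n + b - 1))
      ≤ (n + 1) * ((a - q - 1) * (b - q - 1) + (a + b - c - 2 - q) * (q + n)) := by
    nlinarith
  nlinarith [abs_nonneg (pochRatio a b c q n)]
end

/-- If `a + b > c + q + 2`, then
`(a−q−1)(b−q−1)·₃F₂(1,c,q;a,b;1) + q(a+b−c−2−q)·₃F₂(1,c,q+1;a,b;1) = (a−1)(b−1)`. -/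
theorem stmt3 (a b c q : ℝ) (ha : NotNonposInt a) (hb : NotNonposInt b)
    (h : a + b > c + q + 2) :
    (a - q - 1) * (b - q - 1) * F32 1 c q a b 1
      + q * (a + b - c - 2 - q) * F32 1 c (q + 1) a b 1
      = (a - 1) * (b - 1) := by
  obtain ⟨δ, hδ, hev⟩ := eventually_abs_antidiff ha hb h
  obtain ⟨hlim, hs⟩ := tendsto_zero_and_summable_sub_succ hδ (hev.mono fun _ hn => hn.1)
  have ht : Summable (pochRatio a b c q) :=
    hs.abs.of_norm_bounded_eventually (Nat.cofinite_eq_atTop ▸ hev.mono fun _ hn => hn.2)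
  have hsum := hasSum_sub_succ hs hlim
  simp only [antidiff_sub_antidiff_succ ha hb, antidiff_zero, sub_zero] at hs hsum
  have hd : a + b - c - 2 - q ≠ 0 := by linarith
  have hqt : Summable fun n : ℕ => (q + n) * pochRatio a b c q n :=
    ((hs.sub (ht.mul_left ((a - q - 1) * (b - q - 1)))).div_const (a + b - c - 2 - q)).congr
      fun n => by field_simp; ring
  have hsum' := (ht.hasSum.mul_left ((a - q - 1) * (b - q - 1))).add
    (hqt.hasSum.mul_left (a + b - c - 2 - q))
  rw [F32_eq_tsum_pochRatio ha hb]
  linear_combination hsum'.unique hsum + (a + b - c - 2 - q) * mul_F32_add_one_eq_tsum ha hb
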